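/- arXiv:1603.03733 — 3 statements merged into one kernel-verified Lean document; each statement's English description precedes it below -/
import Mathlib

section
/- For strictly positive discrete distributions, conditional independence satisfies the intersection axiom: if X ⟂⟂ Y | (Z, W) and X ⟂⟂ W | (Z, Y), then X ⟂⟂ (Y, W) | Z. -/
open Finset

/-!
Fix `x` and `z`, and compare `f(y, w) = P(x, y, w, z)` with the marginal `g(y, w) = P(y, w, z)`.
The first hypothesis says that `f` is proportional to `g` on every column `w = const`, the second
that it is proportional on every row `y = const`. Since `g > 0`, the ratio `f / g` is then
constant on the whole grid, and summing `f = k g` over `(y, w)` gives the claim.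
-/

section Proportional

variable {ι : Type*} [Fintype ι] {f g : ι → ℝ}

theorem mul_eq_mul_of_mul_sum_eq_sum_mul (hg : ∑ j, g j ≠ 0)
    (h : ∀ i, f i * ∑ j, g j = (∑ j, f j) * g i) (i j : ι) :
    f i * g j = f j * g i :=
  mul_right_cancel₀ hg (by linear_combination g j * h i - g i * h j)

theorem mul_sum_eq_sum_mul_of_mul_eq_mul (h : ∀ i j, f i * g j = f j * g i) (i : ι) :
    f i * ∑ j, g j = (∑ j, f j) * g i := by
  rw [mul_sum, sum_mul]
  exact sum_congr rfl fun j _ => h i j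

end Proportional

theorem mul_eq_mul_of_proportional_rows_cols {B C : Type*} [Fintype B] [Fintype C]
    {f g : B → C → ℝ} (hg : ∀ b c, 0 < g b c)
    (hcol : ∀ b c, f b c * ∑ b', g b' c = (∑ b', f b' c) * g b c)
    (hrow : ∀ b c, f b c * ∑ c', g b c' = (∑ c', f b c') * g b c) (b b₀ : B) (c c₀ : C) :
    f b c * g b₀ c₀ = f b₀ c₀ * g b c := by
  have hrow_b : f b c * g b c₀ = f b c₀ * g b c :=
    mul_eq_mul_of_mul_sum_eq_sum_mul
      (sum_pos (fun c' _ => hg b c') ⟨c, mem_univ c⟩).ne' (hrow b) c c₀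
  have hcol_c₀ : f b c₀ * g b₀ c₀ = f b₀ c₀ * g b c₀ :=
    mul_eq_mul_of_mul_sum_eq_sum_mul (f := fun b' => f b' c₀) (g := fun b' => g b' c₀)
      (sum_pos (fun b' _ => hg b' c₀) ⟨b, mem_univ b⟩).ne' (fun b' => hcol b' c₀) b b₀
  apply mul_right_cancel₀ (hg b c₀).ne'
  linear_combination g b₀ c₀ * hrow_b + g b c * hcol_c₀

theorem intersection_axiom_positive_discrete_general
    {A B C D : Type*} [Fintype A] [Fintype B] [Fintype C] [Fintype D]
    (p : A → B → C → D → ℝ)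
    (hpos : ∀ a b c d, 0 < p a b c d)
    -- X ⟂⟂ Y | (Z, W):
    (h1 : ∀ a b c d, p a b c d * (∑ a', ∑ b', p a' b' c d)
      = (∑ b', p a b' c d) * (∑ a', p a' b c d))
    -- X ⟂⟂ W | (Z, Y):
    (h2 : ∀ a b c d, p a b c d * (∑ a', ∑ c', p a' b c' d)
      = (∑ c', p a b c' d) * (∑ a', p a' b c d)) :
    -- X ⟂⟂ (Y, W) | Z:
    ∀ a b c d, p a b c d * (∑ a', ∑ b', ∑ c', p a' b' c' d)
      = (∑ b', ∑ c', p a b' c' d) * (∑ a', p a' b c d) := by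
  intro a b c d
  have hmarg_pos : ∀ b' c', 0 < ∑ a', p a' b' c' d :=
    fun b' c' => sum_pos (fun a' _ => hpos a' b' c' d) ⟨a, mem_univ a⟩
  have hprop : ∀ (bc bc₀ : B × C),
      p a bc.1 bc.2 d * ∑ a', p a' bc₀.1 bc₀.2 d
        = p a bc₀.1 bc₀.2 d * ∑ a', p a' bc.1 bc.2 d :=
    fun bc bc₀ => mul_eq_mul_of_proportional_rows_cols (f := fun b' c' => p a b' c' d) hmarg_pos
      (fun b' c' => by rw [sum_comm]; exact h1 a b' c' d)
      (fun b' c' => by rw [sum_comm]; exact h2 a b' c' d) bc.1 bc₀.1 bc.2 bc₀.2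
  have hgrid := mul_sum_eq_sum_mul_of_mul_eq_mul hprop (b, c)
  simp only [Fintype.sum_prod_type] at hgrid
  rwa [sum_comm, sum_congr rfl fun b' _ => sum_comm]

/-- Intersection graphoid axiom for strictly positive discrete distributions.
`p a b c d` is the joint pmf of `(X, Y, W, Z)` at `(a, b, c, d)`.
Conditional independence `U ⟂⟂ V | S` is expressed via the cross-multiplication
identity `P(u,v,s) * P(s) = P(u,s) * P(v,s)`.
If `X ⟂⟂ Y | (Z, W)` and `X ⟂⟂ W | (Z, Y)`, then `X ⟂⟂ (Y, W) | Z`. -/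
theorem intersection_axiom_positive_discrete
    {A B C D : Type*} [Fintype A] [Fintype B] [Fintype C] [Fintype D]
    (p : A → B → C → D → ℝ)
    (hpos : ∀ a b c d, 0 < p a b c d)
    (hsum : ∑ a, ∑ b, ∑ c, ∑ d, p a b c d = 1)
    -- X ⟂⟂ Y | (Z, W):
    (h1 : ∀ a b c d, p a b c d * (∑ a', ∑ b', p a' b' c d)
      = (∑ b', p a b' c d) * (∑ a', p a' b c d))
    -- X ⟂⟂ W | (Z, Y):
    (h2 : ∀ a b c d, p a b c d * (∑ a', ∑ c', p a' b c' d)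
      = (∑ c', p a b c' d) * (∑ a', p a' b c d)) :
    -- X ⟂⟂ (Y, W) | Z:
    ∀ a b c d, p a b c d * (∑ a', ∑ b', ∑ c', p a' b' c' d)
      = (∑ b', ∑ c', p a b' c' d) * (∑ a', p a' b c d) :=
  intersection_axiom_positive_discrete_general p hpos h1 h2
end

section
/- Graph separation satisfies the intersection property: for pairwise disjoint vertex sets A, B, C, D, if C ∪ D separates A from B and C ∪ B separates A from D, then C separates A from B ∪ D. -/
/- A walk from `A` to `B ∪ D` that avoids `C` must, by the two hypotheses, visit `B ∪ D`
before its last vertex; cutting it there gives a shorter such walk, so a shortest one cannot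
exist. -/

/-- `S` separates `A` from `B` in `G` if every walk from a vertex of `A` to a vertex of `B`
passes through some vertex of `S`. -/
def Separates {V : Type*} (G : SimpleGraph V) (A B S : Set V) : Prop :=
  ∀ a ∈ A, ∀ b ∈ B, ∀ p : G.Walk a b, ∃ v ∈ p.support, v ∈ S

open SimpleGraph Walk

theorem Separates.of_forall_walk_meets_or_hits_early {V : Type*} {G : SimpleGraph V}
    {A B S : Set V}
    (h : ∀ a ∈ A, ∀ b ∈ B, ∀ p : G.Walk a b,
      (∃ v ∈ p.support, v ∈ S) ∨ ∃ v ∈ p.support, v ∈ B ∧ v ≠ b) :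
    Separates G A B S := by
  classical
  intro a ha b hb p
  induction hn : p.length using Nat.strong_induction_on generalizing b with
  | _ n ih =>
    obtain hS | ⟨v, hv, hvB, hvb⟩ := h a ha b hb p
    · exact hS
    · obtain ⟨w, hw, hwS⟩ :=
        ih _ (hn ▸ length_takeUntil_lt_length hv hvb) v hvB (p.takeUntil v hv) rfl
      exact ⟨w, p.support_takeUntil_subset_support hv hw, hwS⟩

theorem separation_intersection_general {V : Type*} (G : SimpleGraph V)
    (A B C D : Set V)
    (hBD : Disjoint B D)
    (h1 : Separates G A B (C ∪ D)) (h2 : Separates G A D (C ∪ B)) :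
    Separates G A (B ∪ D) C := by
  refine Separates.of_forall_walk_meets_or_hits_early fun a ha b hb p => ?_
  rcases hb with hbB | hbD
  · obtain ⟨v, hv, hvC | hvD⟩ := h1 a ha b hbB p
    · exact .inl ⟨v, hv, hvC⟩
    · exact .inr ⟨v, hv, .inr hvD, fun hvb => hBD.ne_of_mem hbB hvD hvb.symm⟩
  · obtain ⟨v, hv, hvC | hvB⟩ := h2 a ha b hbD p
    · exact .inl ⟨v, hv, hvC⟩
    · exact .inr ⟨v, hv, .inl hvB, fun hvb => hBD.ne_of_mem hvB hbD hvb⟩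

/-- Intersection property for graph separation: for pairwise disjoint `A, B, C, D`,
if `C ∪ D` separates `A` from `B` and `C ∪ B` separates `A` from `D`,
then `C` separates `A` from `B ∪ D`. -/
theorem separation_intersection {V : Type*} [Fintype V] (G : SimpleGraph V)
    (A B C D : Set V)
    (hAB : Disjoint A B) (hAC : Disjoint A C) (hAD : Disjoint A D)
    (hBC : Disjoint B C) (hBD : Disjoint B D) (hCD : Disjoint C D)
    (h1 : Separates G A B (C ∪ D)) (h2 : Separates G A D (C ∪ B)) :
    Separates G A (B ∪ D) C :=
  separation_intersection_general G A B C D hBD h1 h2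
end

section
/- Let P be a strictly positive discrete distribution over the vertices of a finite simple graph G. Then P satisfies the mutual conditional independence property for every maximal independent set of G (i.e., for each maximal independent set I, the variables in I are mutually conditionally independent given V \ I) if and only if P satisfies the pairwise Markov property with respect to G. -/
open Finset

/-- A set of vertices is independent if no two of its elements are adjacent. -/
def IsIndepSet {V : Type*} (G : SimpleGraph V) (s : Set V) : Prop :=
  ∀ ⦃x⦄, x ∈ s → ∀ ⦃y⦄, y ∈ s → ¬ G.Adj x y

/-- A maximal independent set (as a finset of vertices). -/
def IsMaxIndepSet {V : Type*} (G : SimpleGraph V) (I : Finset V) : Prop :=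
  IsIndepSet G (I : Set V) ∧ ∀ J : Finset V, IsIndepSet G (J : Set V) → I ⊆ J → J = I

/-- Marginal of the pmf `p`, summing out the coordinates in `T`, the other
coordinates being fixed as in `x`. -/
noncomputable def marg {V : Type*} [Fintype V] [DecidableEq V] {S : V → Type*}
    [∀ v, Fintype (S v)] (p : (∀ v, S v) → ℝ) (T : Finset V) (x : ∀ v, S v) : ℝ :=
  ∑ y : ∀ v : T, S v, p (fun v => if h : v ∈ T then y ⟨v, h⟩ else x v)

/-!
Write `m_T` for the marginal summing out the variables in `T`. If `p = f * g` where `f` does not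
depend on `x_B` and `g` does not depend on `x_A`, the sums defining `m_A`, `m_B` and `m_{A ∪ B}`
factor, so `X_A ⟂⟂ X_B` given the rest. For a maximal independent set `I ∋ u, v`, the mutual
independence identity writes `p` as `m_{I ∖ v}`, which does not depend on `x_u`, times a quotient
of marginals which does not depend on `x_v`.

Conversely, for positive `p`, `X_A ⟂⟂ X_B` given the rest says exactly that the conditional
`p / m_A` does not depend on `x_B`; and a function independent of `x_B` and of `x_C` is
independent of `x_{B ∪ C}`, which is the intersection property. By induction the pairwise Markov
property gives `X_a ⟂⟂ X_J` for every set `J` of non-neighbours of `a`. On an independent set `I`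
this yields `p m_I = m_a m_{I ∖ a}` for `a ∈ I` and `p ∏_{a ∈ I} m_a = p ^ |I| m_I`; multiply the
former over `a ∈ I` and divide by the latter.
-/

open Function

lemma DependsOn.inter {ι β : Type*} {α : ι → Type*} {f : (∀ i, α i) → β} {s t : Set ι}
    (hs : DependsOn f s) (ht : DependsOn f t) : DependsOn f (s ∩ t) := by
  classical
  intro x y hxy
  let z : ∀ i, α i := fun i => if i ∈ s then x i else y i
  calc f x = f z := hs fun i hi => by simp [z, hi]
    _ = f y := ht fun i hi => by
      by_cases his : i ∈ s
      · simp [z, his, hxy i ⟨his, hi⟩]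
      · simp [z, his]

section Marginal

variable {V : Type*} [Fintype V] [DecidableEq V] {S : V → Type*} [∀ v, Fintype (S v)]

lemma marg_eq_sum_updateFinset (f : (∀ v, S v) → ℝ) (T : Finset V) (x : ∀ v, S v) :
    marg f T x = ∑ y, f (updateFinset x T y) := rfl

@[simp]
lemma marg_empty (f : (∀ v, S v) → ℝ) (x : ∀ v, S v) : marg f ∅ x = f x := by
  rw [marg_eq_sum_updateFinset, Fintype.sum_subsingleton _ (fun v => isEmptyElim v),
    updateFinset_empty]

lemma DependsOn.marg {f : (∀ v, S v) → ℝ} {s : Set V} (hf : DependsOn f s) (T : Finset V) :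
    DependsOn (marg f T) (s \ T) := fun _ _ hxy =>
  Finset.sum_congr rfl fun y _ => hf.updateFinset y hxy

lemma dependsOn_marg_of_subset (f : (∀ v, S v) → ℝ) {B T : Finset V} (hBT : B ⊆ T) :
    DependsOn (marg f T) (↑B)ᶜ :=
  ((dependsOn_univ f).marg T).mono fun _ hv hvB => hv.2 (hBT hvB)

lemma marg_pos {f : (∀ v, S v) → ℝ} (hf : ∀ x, 0 < f x) (T : Finset V) (x : ∀ v, S v) :
    0 < marg f T x :=
  Finset.sum_pos (fun _ _ => hf _) ⟨fun v => x v, Finset.mem_univ _⟩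

lemma marg_mul_left {c f : (∀ v, S v) → ℝ} {T : Finset V} (hc : DependsOn c (↑T)ᶜ)
    (x : ∀ v, S v) : marg (fun y => c y * f y) T x = c x * marg f T x := by
  rw [marg_eq_sum_updateFinset, marg_eq_sum_updateFinset, Finset.mul_sum]
  refine Finset.sum_congr rfl fun y _ => congrArg (· * _) (hc fun v hv => ?_)
  simp [updateFinset, show v ∉ T from hv]

lemma marg_mul_right {f c : (∀ v, S v) → ℝ} {T : Finset V} (hc : DependsOn c (↑T)ᶜ)
    (x : ∀ v, S v) : marg (fun y => f y * c y) T x = marg f T x * c x := by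
  simpa only [mul_comm] using marg_mul_left (f := f) hc x

lemma marg_union (f : (∀ v, S v) → ℝ) {s t : Finset V} (hst : Disjoint s t) (x : ∀ v, S v) :
    marg f (s ∪ t) x = marg (marg f t) s x := by
  simp only [marg_eq_sum_updateFinset, updateFinset_updateFinset hst]
  rw [← Fintype.sum_prod_type', ← (Equiv.piFinsetUnion S hst).sum_comp]

end Marginal

section CondIndep

variable {V : Type*} [Fintype V] [DecidableEq V] {S : V → Type*} [∀ v, Fintype (S v)]
  {p : (∀ v, S v) → ℝ} {A B C : Finset V}

/-- `X_A ⟂⟂ X_B` given the remaining variables, in the cross-multiplied form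
`p(x) p(x_{V ∖ (A ∪ B)}) = p(x_{V ∖ A}) p(x_{V ∖ B})`. -/
def CondIndep (p : (∀ v, S v) → ℝ) (A B : Finset V) : Prop :=
  ∀ x, p x * marg p (A ∪ B) x = marg p A x * marg p B x

/-- Mutual conditional independence of the variables in `I` given the others, in the
cross-multiplied form of `p(x_I | x_{V ∖ I}) = ∏_{v ∈ I} p(x_v | x_{V ∖ I})`. -/
def MutuallyCondIndep (p : (∀ v, S v) → ℝ) (I : Finset V) : Prop :=
  ∀ x, p x * marg p I x ^ (I.card - 1) = ∏ v ∈ I, marg p (I.erase v) x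

lemma condIndep_singleton_iff {u v : V} :
    CondIndep p {u} {v} ↔ ∀ x, p x * marg p {u, v} x = marg p {v} x * marg p {u} x := by
  simp only [CondIndep, ← Finset.insert_eq, mul_comm (marg p {u} _)]

lemma condIndep_empty (p : (∀ v, S v) → ℝ) (A : Finset V) : CondIndep p A ∅ := fun x => by
  rw [Finset.union_empty, marg_empty, mul_comm]

lemma condIndep_of_factorization {f g : (∀ v, S v) → ℝ} (hAB : Disjoint A B)
    (hf : DependsOn f (↑B)ᶜ) (hg : DependsOn g (↑A)ᶜ) (hp : ∀ x, p x = f x * g x) :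
    CondIndep p A B := by
  have hp' : p = fun x => f x * g x := funext hp
  have hgB : DependsOn (marg g B) (↑A)ᶜ := (hg.marg B).mono Set.sdiff_subset
  have hB : marg p B = fun y => f y * marg g B y := funext fun y => by
    rw [hp', marg_mul_left hf]
  intro x
  have hA : marg p A x = marg f A x * g x := by rw [hp', marg_mul_right hg]
  have hAB' : marg p (A ∪ B) x = marg f A x * marg g B x := by
    rw [marg_union p hAB, hB, marg_mul_right hgB]
  rw [hA, hB, hAB', hp x]
  ring

variable (hpos : ∀ x, 0 < p x)
include hpos

lemma condIndep_iff_dependsOn_div (hAB : Disjoint A B) :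
    CondIndep p A B ↔ DependsOn (fun x => p x / marg p A x) (↑B)ᶜ := by
  constructor
  · intro h
    have hcond : ∀ x, p x / marg p A x = marg p B x / marg p (A ∪ B) x := fun x =>
      (div_eq_div_iff (marg_pos hpos A x).ne' (marg_pos hpos _ x).ne').mpr
        ((h x).trans (mul_comm _ _))
    intro x y hxy
    dsimp only
    rw [hcond, hcond, dependsOn_marg_of_subset p subset_rfl hxy,
      dependsOn_marg_of_subset p Finset.subset_union_right hxy]
  · intro h
    refine condIndep_of_factorization hAB h (dependsOn_marg_of_subset p subset_rfl) fun x => ?_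
    rw [div_mul_cancel₀ _ (marg_pos hpos A x).ne']

lemma CondIndep.union (hAB : Disjoint A B) (hAC : Disjoint A C)
    (hB : CondIndep p A B) (hC : CondIndep p A C) : CondIndep p A (B ∪ C) := by
  rw [condIndep_iff_dependsOn_div hpos (Finset.disjoint_union_right.mpr ⟨hAB, hAC⟩),
    Finset.coe_union, Set.compl_union]
  exact ((condIndep_iff_dependsOn_div hpos hAB).mp hB).inter
    ((condIndep_iff_dependsOn_div hpos hAC).mp hC)

lemma condIndep_of_forall_singleton {J : Finset V} (hAJ : Disjoint A J)
    (h : ∀ b ∈ J, CondIndep p A {b}) : CondIndep p A J := by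
  induction J using Finset.induction_on with
  | empty => exact condIndep_empty p A
  | insert b J hbJ ih =>
    rw [Finset.disjoint_insert_right] at hAJ
    rw [Finset.insert_eq]
    exact CondIndep.union hpos (Finset.disjoint_singleton_right.mpr hAJ.1) hAJ.2
      (h b (Finset.mem_insert_self b J))
      (ih hAJ.2 fun c hc => h c (Finset.mem_insert_of_mem hc))

end CondIndep

section MutuallyCondIndep

variable {V : Type*} [Fintype V] [DecidableEq V] {S : V → Type*} [∀ v, Fintype (S v)]
  {p : (∀ v, S v) → ℝ} {I : Finset V}

lemma MutuallyCondIndep.condIndep (hpos : ∀ x, 0 < p x) (h : MutuallyCondIndep p I) {u v : V}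
    (hu : u ∈ I) (hv : v ∈ I) (huv : u ≠ v) : CondIndep p {u} {v} := by
  have huI : u ∈ I.erase v := Finset.mem_erase.mpr ⟨huv, hu⟩
  refine condIndep_of_factorization (Finset.disjoint_singleton.mpr huv)
    (f := fun x => (∏ w ∈ I.erase v, marg p (I.erase w) x) / marg p I x ^ (I.card - 1))
    (fun x y hxy => ?_) (dependsOn_marg_of_subset p (Finset.singleton_subset_iff.mpr huI))
    fun x => ?_
  · have hvw : ∀ w ∈ I.erase v, {v} ⊆ I.erase w := fun w hw =>
      Finset.singleton_subset_iff.mpr (Finset.mem_erase.mpr ⟨(Finset.ne_of_mem_erase hw).symm, hv⟩)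
    dsimp only
    rw [Finset.prod_congr rfl fun w hw => dependsOn_marg_of_subset p (hvw w hw) hxy,
      dependsOn_marg_of_subset p (Finset.singleton_subset_iff.mpr hv) hxy]
  · rw [div_mul_eq_mul_div, eq_div_iff (pow_pos (marg_pos hpos I x) _).ne', mul_comm _ (marg p _ x),
      Finset.mul_prod_erase I (fun w => marg p (I.erase w) x) hv]
    exact h x

lemma mul_prod_marg_singleton (hpos : ∀ x, 0 < p x)
    (hI : (I : Set V).Pairwise fun a b => CondIndep p {a} {b}) (x : ∀ v, S v) :
    p x * ∏ a ∈ I, marg p {a} x = p x ^ I.card * marg p I x := by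
  induction I using Finset.induction_on with
  | empty => simp
  | insert b J hbJ ih =>
    have hJ : (J : Set V).Pairwise fun a b => CondIndep p {a} {b} :=
      hI.mono (by simp)
    have hbJ' : CondIndep p {b} J :=
      condIndep_of_forall_singleton hpos (Finset.disjoint_singleton_left.mpr hbJ) fun c hc =>
        hI (by simp) (by simp [hc]) fun hbc => hbJ (hbc ▸ hc)
    rw [Finset.prod_insert hbJ, Finset.card_insert_of_notMem hbJ, Finset.insert_eq]
    calc p x * (marg p {b} x * ∏ a ∈ J, marg p {a} x)
        = marg p {b} x * (p x * ∏ a ∈ J, marg p {a} x) := by ring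
      _ = p x ^ J.card * (marg p {b} x * marg p J x) := by rw [ih hJ]; ring
      _ = p x ^ (J.card + 1) * marg p ({b} ∪ J) x := by rw [← hbJ' x]; ring

lemma mutuallyCondIndep_of_pairwise (hpos : ∀ x, 0 < p x) (hne : I.Nonempty)
    (hI : (I : Set V).Pairwise fun a b => CondIndep p {a} {b}) : MutuallyCondIndep p I := by
  intro x
  have hsplit : ∀ a ∈ I, p x * marg p I x = marg p {a} x * marg p (I.erase a) x := by
    intro a ha
    have := condIndep_of_forall_singleton hpos (Finset.disjoint_singleton_left.mpr
      (Finset.notMem_erase a I)) (fun b hb => hI ha (Finset.mem_of_mem_erase hb)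
        (Finset.ne_of_mem_erase hb).symm) x
    rwa [← Finset.insert_eq, Finset.insert_erase ha] at this
  have hprod : (p x * marg p I x) ^ I.card
      = (∏ a ∈ I, marg p {a} x) * ∏ a ∈ I, marg p (I.erase a) x := by
    rw [← Finset.prod_mul_distrib, ← Finset.prod_congr rfl hsplit, Finset.prod_const]
  have hsing := mul_prod_marg_singleton hpos hI x
  obtain ⟨n, hn⟩ : ∃ n, I.card = n + 1 := Nat.exists_eq_succ_of_ne_zero hne.card_pos.ne'
  rw [hn] at hprod hsing ⊢
  apply mul_left_cancel₀ (mul_pos (pow_pos (hpos x) (n + 1)) (marg_pos hpos I x)).ne'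
  rw [Nat.add_sub_cancel]
  linear_combination p x * hprod + (∏ a ∈ I, marg p (I.erase a) x) * hsing

lemma mutuallyCondIndep_of_isEmpty [IsEmpty V] (hsum : ∑ x, p x = 1) (I : Finset V) :
    MutuallyCondIndep p I := fun x => by
  rw [Finset.eq_empty_of_isEmpty I, Finset.prod_empty, ← hsum, Fintype.sum_subsingleton p x]
  simp

end MutuallyCondIndep

section IndepSet

variable {V : Type*} {G : SimpleGraph V}

lemma isIndepSet_pair [DecidableEq V] {u v : V} (h : ¬ G.Adj u v) :
    IsIndepSet G (({u, v} : Finset V) : Set V) := by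
  intro a ha b hb
  simp only [Finset.coe_insert, Finset.coe_singleton, Set.mem_insert_iff,
    Set.mem_singleton_iff] at ha hb
  rcases ha with rfl | rfl <;> rcases hb with rfl | rfl
  exacts [G.irrefl, h, fun h' => h h'.symm, G.irrefl]

lemma IsIndepSet.exists_isMaxIndepSet_superset [Finite V] {s : Finset V}
    (hs : IsIndepSet G (s : Set V)) : ∃ I, IsMaxIndepSet G I ∧ s ⊆ I := by
  obtain ⟨I, hsI, hmax⟩ :=
    (Set.toFinite {J : Finset V | IsIndepSet G (J : Set V)}).exists_le_maximal hs
  exact ⟨I, ⟨hmax.prop, fun J hJ hIJ => le_antisymm (hmax.2 hJ hIJ) hIJ⟩, hsI⟩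

lemma IsMaxIndepSet.nonempty [Nonempty V] {I : Finset V} (hI : IsMaxIndepSet G I) :
    I.Nonempty := by
  classical
  obtain ⟨v⟩ := ‹Nonempty V›
  by_contra hempty
  have hv := hI.2 {v} (by simp [IsIndepSet])
    (by simp [Finset.not_nonempty_iff_eq_empty.mp hempty])
  exact hempty ⟨v, by simp [← hv]⟩

end IndepSet

/-- For a strictly positive discrete distribution `p` over the vertices of a finite simple
graph `G`: the mutual conditional independence property holds for every maximal independent
set `I` (the variables in `I` are mutually conditionally independent given the rest,
`P(x_I | x_{V\I}) = ∏_{v ∈ I} P(x_v | x_{V\I})`) if and only if `p` satisfies the pairwise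
Markov property w.r.t. `G` (`X_u ⟂⟂ X_v | rest` for every non-adjacent pair `u ≠ v`).
Both conditional independencies are stated in cross-multiplied form. -/
theorem MCIP_iff_pairwise_Markov
    {V : Type*} [Fintype V] [DecidableEq V] {S : V → Type*} [∀ v, Fintype (S v)]
    (G : SimpleGraph V) (p : (∀ v, S v) → ℝ)
    (hpos : ∀ x, 0 < p x) (hsum : ∑ x : ∀ v, S v, p x = 1) :
    (∀ I : Finset V, IsMaxIndepSet G I →
        ∀ x : ∀ v, S v,
          p x * (marg p I x) ^ (I.card - 1) = ∏ v ∈ I, marg p (I.erase v) x)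
    ↔ (∀ u v : V, u ≠ v → ¬ G.Adj u v →
        ∀ x : ∀ w, S w,
          p x * marg p {u, v} x = marg p {v} x * marg p {u} x) := by
  simp_rw [← condIndep_singleton_iff]
  change (∀ I, IsMaxIndepSet G I → MutuallyCondIndep p I) ↔ _
  constructor
  · intro hmcip u v huv hadj
    obtain ⟨I, hI, huvI⟩ := (isIndepSet_pair hadj).exists_isMaxIndepSet_superset
    exact (hmcip I hI).condIndep hpos (huvI (by simp)) (huvI (by simp)) huv
  · intro hpm I hI
    cases isEmpty_or_nonempty V
    · exact mutuallyCondIndep_of_isEmpty hsum I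
    · exact mutuallyCondIndep_of_pairwise hpos hI.nonempty fun a ha b hb hab =>
        hpm a b hab (hI.1 ha hb)
end
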